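/- For the 5×5 Horn matrix M, the variational index μ(M) = min{xᵗMx : ‖x‖ = 1, x ≥ 0} equals 0, attained at x = (1/√2)(1,1,0,0,0)ᵗ. -/

import Mathlib

open Matrix

/-!
The Horn quadratic form can be written in two ways as a square plus two cross terms
(`hornMatrix_quadForm_eq_left`, `hornMatrix_quadForm_eq_right`). On the nonnegative orthant
the cross terms of the first are nonnegative when `x 3 ≤ x 4`, those of the second when
`x 4 ≤ x 3`, so the form is nonnegative there; and it vanishes at `(1,1,0,0,0)`.
-/

def Matrix.IsCopositive {n : Type*} [Fintype n] (A : Matrix n n ℝ) : Prop :=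
  ∀ x : n → ℝ, 0 ≤ x → 0 ≤ x ⬝ᵥ A *ᵥ x

def hornMatrix : Matrix (Fin 5) (Fin 5) ℝ :=
  !![1, -1, 1, 1, -1;
     -1, 1, -1, 1, 1;
     1, -1, 1, -1, 1;
     1, 1, -1, 1, -1;
     -1, 1, 1, -1, 1]

lemma hornMatrix_quadForm_eq_left (x : Fin 5 → ℝ) :
    x ⬝ᵥ hornMatrix *ᵥ x =
      (x 0 - x 1 + x 2 + x 3 - x 4) ^ 2 + 4 * x 1 * x 3 + 4 * x 2 * (x 4 - x 3) := by
  simp [hornMatrix, dotProduct, mulVec, Fin.sum_univ_five]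
  ring

lemma hornMatrix_quadForm_eq_right (x : Fin 5 → ℝ) :
    x ⬝ᵥ hornMatrix *ᵥ x =
      (x 0 - x 1 + x 2 - x 3 + x 4) ^ 2 + 4 * x 1 * x 4 + 4 * x 0 * (x 3 - x 4) := by
  rw [hornMatrix_quadForm_eq_left]
  ring

theorem hornMatrix_isCopositive : hornMatrix.IsCopositive := by
  intro x hx
  have hx : ∀ i, 0 ≤ x i := hx
  rcases le_total (x 3) (x 4) with h | h
  · rw [hornMatrix_quadForm_eq_left]
    linarith [sq_nonneg (x 0 - x 1 + x 2 + x 3 - x 4), mul_nonneg (hx 1) (hx 3),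
      mul_nonneg (hx 2) (sub_nonneg.2 h)]
  · rw [hornMatrix_quadForm_eq_right]
    linarith [sq_nonneg (x 0 - x 1 + x 2 - x 3 + x 4), mul_nonneg (hx 1) (hx 4),
      mul_nonneg (hx 0) (sub_nonneg.2 h)]

lemma hornMatrix_quadForm_isotropic : ![1, 1, 0, 0, 0] ⬝ᵥ hornMatrix *ᵥ ![1, 1, 0, 0, 0] = 0 := by
  rw [hornMatrix_quadForm_eq_left]
  simp

lemma smul_dotProduct_mulVec_smul {n : Type*} [Fintype n] (A : Matrix n n ℝ) (c : ℝ)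
    (v : n → ℝ) : (c • v) ⬝ᵥ A *ᵥ (c • v) = c ^ 2 * (v ⬝ᵥ A *ᵥ v) := by
  rw [mulVec_smul, smul_dotProduct, dotProduct_smul, smul_eq_mul, smul_eq_mul]
  ring

/-- The variational index `μ(M) = min {xᵗMx : ‖x‖ = 1, x ≥ 0}` of the 5×5 Horn
matrix equals 0 and is attained at `x = (1/√2)(1,1,0,0,0)ᵗ`. -/
theorem horn_matrix_variational_index
    (M : Matrix (Fin 5) (Fin 5) ℝ)
    (hM : M = !![1, -1, 1, 1, -1;
                 -1, 1, -1, 1, 1;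
                 1, -1, 1, -1, 1;
                 1, 1, -1, 1, -1;
                 -1, 1, 1, -1, 1])
    (x0 : Fin 5 → ℝ) (hx0 : x0 = (Real.sqrt 2)⁻¹ • ![1, 1, 0, 0, 0]) :
    (∑ i, (x0 i) ^ 2 = 1) ∧ (∀ i, 0 ≤ x0 i) ∧ x0 ⬝ᵥ M *ᵥ x0 = 0 ∧
      ∀ x : Fin 5 → ℝ, (∑ i, (x i) ^ 2 = 1) → (∀ i, 0 ≤ x i) →
        0 ≤ x ⬝ᵥ M *ᵥ x := by
  change M = hornMatrix at hM
  subst hM hx0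
  have hsq : (Real.sqrt 2)⁻¹ ^ 2 = 2⁻¹ := by rw [inv_pow, Real.sq_sqrt zero_le_two]
  refine ⟨?_, ?_, ?_, fun x _ hx => hornMatrix_isCopositive x hx⟩
  · simp only [Pi.smul_apply, smul_eq_mul, mul_pow, ← Finset.mul_sum, hsq]
    simp [Fin.sum_univ_five, one_add_one_eq_two]
  · intro i
    fin_cases i <;> simp
  · rw [smul_dotProduct_mulVec_smul, hornMatrix_quadForm_isotropic, mul_zero]
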